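/- arXiv:2106.15131 — 2 statements merged into one kernel-verified Lean document; each statement's English description precedes it below -/
import Mathlib

section
/- Let Φ be an N-function with index s ≥ 1 and let μ ≥ 0 be a real number. Then the function Φ_μ(t) := t^μ·Φ(t) is an N-function with index μ + 3·s². -/
/-!
For `t > 0` put `A = Φ t`, `B = t Φ'(t)` and `C = t² Φ''(t)`. The index condition says
`B ≤ s C` and `C ≤ s B`; convexity and `Φ 0 = 0` give `A ≤ B`, and integrating
`(s + 1) Φ' - (t Φ')' ≥ 0` from `0` gives `B ≤ (s + 1) A`. For `Φ_μ t = t^μ Φ t` one has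
`Φ_μ'(t) = t^(μ-1) (μ A + B)` and `t Φ_μ''(t) = t^(μ-1) (μ (μ-1) A + 2 μ B + C)`, so the index
condition for `Φ_μ` with constant `μ + 3 s²` reduces to two polynomial inequalities in `A, B, C`.
For `μ < 1` the factor `t^μ` is not `C¹` at `0`, but `Φ_μ'(t) = μ t^μ (Φ t / t) + t^μ Φ'(t)`
still tends to `0` because `Φ t / t → 0` and `Φ' → 0`.
-/

open Real Set Filter MeasureTheory
open scoped RealInnerProductSpace

/-- An N-function with index `s ≥ 1`: a function `Φ : [0,∞) → [0,∞)` with `Φ(0) = 0`,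
strictly increasing and convex, `Φ(t)/t → 0` as `t → 0⁺`, `Φ(t)/t → ∞` as `t → ∞`,
continuously differentiable on `[0,∞)`, twice continuously differentiable on `(0,∞)`,
and `Φ'(t) > 0` with `(1/s)·Φ'(t) ≤ t·Φ''(t) ≤ s·Φ'(t)` for every `t > 0`. -/
structure IsNFunction (Φ : ℝ → ℝ) (s : ℝ) : Prop where
  s_ge_one : 1 ≤ s
  nonneg : ∀ t, 0 ≤ t → 0 ≤ Φ t
  zero : Φ 0 = 0
  strictMonoOn : StrictMonoOn Φ (Ici 0)
  convexOn : ConvexOn ℝ (Ici 0) Φ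
  tendsto_zero : Tendsto (fun t => Φ t / t) (nhdsWithin 0 (Ioi 0)) (nhds 0)
  tendsto_atTop : Tendsto (fun t => Φ t / t) atTop atTop
  contDiffOn_one : ContDiffOn ℝ 1 Φ (Ici 0)
  contDiffOn_two : ContDiffOn ℝ 2 Φ (Ioi 0)
  deriv_pos : ∀ t, 0 < t → 0 < deriv Φ t
  index_lower : ∀ t, 0 < t → (1 / s) * deriv Φ t ≤ t * deriv (deriv Φ) t
  index_upper : ∀ t, 0 < t → t * deriv (deriv Φ) t ≤ s * deriv Φ t

open Topology

section OneSided

variable {g : ℝ → ℝ} {a e : ℝ}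

lemma ContDiffOn.tendsto_deriv_nhdsGT (hg : ContDiffOn ℝ 1 g (Ici a)) :
    Tendsto (deriv g) (𝓝[>] a) (𝓝 (derivWithin g (Ici a) a)) := by
  refine ((hg.continuousOn_derivWithin (uniqueDiffOn_Ici a) le_rfl a self_mem_Ici).mono_left
    (nhdsWithin_mono _ Ioi_subset_Ici_self)).congr' ?_
  filter_upwards [self_mem_nhdsWithin] with u hu
  exact derivWithin_of_mem_nhds (Ici_mem_nhds hu)

lemma contDiffOn_one_Ici_of_tendsto_deriv (hg_cont : ContinuousOn g (Ici a))
    (hg : ContDiffOn ℝ 1 g (Ioi a)) (hlim : Tendsto (deriv g) (𝓝[>] a) (𝓝 e)) :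
    ContDiffOn ℝ 1 g (Ici a) := by
  have hdiff : DifferentiableOn ℝ g (Ioi a) := hg.differentiableOn one_ne_zero
  have hga : HasDerivWithinAt g e (Ici a) a :=
    hasDerivWithinAt_Ici_of_tendsto_deriv hdiff
      ((hg_cont a self_mem_Ici).mono Ioi_subset_Ici_self) self_mem_nhdsWithin hlim
  have heq : ∀ x ∈ Ioi a, derivWithin g (Ici a) x = deriv g x := fun x hx =>
    derivWithin_of_mem_nhds (Ici_mem_nhds hx)
  rw [contDiffOn_one_iff_derivWithin (uniqueDiffOn_Ici a)]
  constructor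
  · intro x hx
    rcases (mem_Ici.1 hx).eq_or_lt with rfl | hx
    · exact hga.differentiableWithinAt
    · exact ((hdiff x hx).differentiableAt (isOpen_Ioi.mem_nhds hx)).differentiableWithinAt
  · intro x hx
    rcases (mem_Ici.1 hx).eq_or_lt with rfl | hx
    · rw [← continuousWithinAt_Ioi_iff_Ici, ContinuousWithinAt,
        hga.derivWithin (uniqueDiffOn_Ici a a self_mem_Ici)]
      exact hlim.congr' (eventually_nhdsWithin_of_forall fun u hu => (heq u hu).symm)
    · refine ((hg.continuousOn_deriv_of_isOpen isOpen_Ioi le_rfl).continuousAt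
        (isOpen_Ioi.mem_nhds hx)).continuousWithinAt.congr_of_eventuallyEq ?_ (heq x hx)
      filter_upwards [mem_nhdsWithin_of_mem_nhds (isOpen_Ioi.mem_nhds hx)] with u hu
      exact heq u hu

end OneSided

section RpowMul

variable {f : ℝ → ℝ} {μ t : ℝ}

lemma hasDerivAt_rpow_mul (ht : 0 < t) (hf : DifferentiableAt ℝ f t) :
    HasDerivAt (fun u => u ^ μ * f u) (μ * t ^ (μ - 1) * f t + t ^ μ * deriv f t) t :=
  (hasDerivAt_rpow_const (Or.inl ht.ne')).mul hf.hasDerivAt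

lemma deriv_rpow_mul (ht : 0 < t) (hf : DifferentiableAt ℝ f t) :
    deriv (fun u => u ^ μ * f u) t = t ^ (μ - 1) * (μ * f t + t * deriv f t) := by
  rw [(hasDerivAt_rpow_mul ht hf).deriv, rpow_sub_one ht.ne']
  field_simp

lemma mul_deriv_deriv_rpow_mul (hf : ContDiffOn ℝ 2 f (Ioi 0)) (ht : 0 < t) :
    t * deriv (deriv fun u => u ^ μ * f u) t =
      t ^ (μ - 1) * (μ * (μ - 1) * f t + 2 * μ * (t * deriv f t) + t ^ 2 * deriv (deriv f) t) := by
  have hdiff : ∀ u ∈ Ioi (0 : ℝ), DifferentiableAt ℝ f u := fun u hu =>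
    (hf.contDiffAt (isOpen_Ioi.mem_nhds hu)).differentiableAt two_ne_zero
  have hdiff' : DifferentiableAt ℝ (deriv f) t :=
    ((hf.deriv_of_isOpen isOpen_Ioi (by norm_num)).contDiffAt
      (isOpen_Ioi.mem_nhds ht)).differentiableAt one_ne_zero
  have hev : deriv (fun u => u ^ μ * f u) =ᶠ[𝓝 t]
      fun u => μ * u ^ (μ - 1) * f u + u ^ μ * deriv f u := by
    filter_upwards [isOpen_Ioi.mem_nhds ht] with u hu
    exact (hasDerivAt_rpow_mul hu (hdiff u hu)).deriv
  have hpow := fun ν : ℝ => hasDerivAt_rpow_const (p := ν) (Or.inl ht.ne')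
  have h2 : HasDerivAt (fun u => μ * u ^ (μ - 1) * f u + u ^ μ * deriv f u)
      (μ * ((μ - 1) * t ^ (μ - 1 - 1)) * f t + μ * t ^ (μ - 1) * deriv f t +
        (μ * t ^ (μ - 1) * deriv f t + t ^ μ * deriv (deriv f) t)) t :=
    (((hpow (μ - 1)).const_mul μ).mul (hdiff t ht).hasDerivAt).add
      ((hpow μ).mul hdiff'.hasDerivAt)
  rw [hev.deriv_eq, h2.deriv]
  simp_rw [rpow_sub_one ht.ne']
  field_simp
  ring

lemma contDiffOn_rpow_mul_Ioi {n : WithTop ℕ∞} (hf : ContDiffOn ℝ n f (Ioi 0)) :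
    ContDiffOn ℝ n (fun u => u ^ μ * f u) (Ioi 0) := fun _ hx =>
  ((contDiffAt_rpow_const_of_ne (ne_of_gt hx)).mul
    (hf.contDiffAt (isOpen_Ioi.mem_nhds hx))).contDiffWithinAt

lemma tendsto_rpow_mul_div_nhdsGT_zero (hμ : 0 ≤ μ)
    (hf : Tendsto (fun t => f t / t) (𝓝[>] 0) (𝓝 0)) :
    Tendsto (fun t => t ^ μ * f t / t) (𝓝[>] 0) (𝓝 0) := by
  have hpow : Tendsto (fun t : ℝ => t ^ μ) (𝓝[>] 0) (𝓝 (0 ^ μ)) :=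
    (continuousAt_rpow_const 0 μ (Or.inr hμ)).tendsto.mono_left nhdsWithin_le_nhds
  simpa only [mul_div_assoc, mul_zero] using hpow.mul hf

lemma tendsto_rpow_mul_div_atTop (hμ : 0 ≤ μ) (hf : Tendsto (fun t => f t / t) atTop atTop) :
    Tendsto (fun t => t ^ μ * f t / t) atTop atTop := by
  refine tendsto_atTop_mono' atTop ?_ hf
  filter_upwards [eventually_ge_atTop 1, hf.eventually_ge_atTop 0] with t ht hft
  rw [mul_div_assoc]
  exact le_mul_of_one_le_left hft (one_le_rpow ht hμ)

lemma contDiffOn_rpow_mul_Ici (hμ : 0 ≤ μ) (hf : ContDiffOn ℝ 1 f (Ici 0)) (hf0 : f 0 = 0)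
    (hslope : Tendsto (fun t => f t / t) (𝓝[>] 0) (𝓝 0)) :
    ContDiffOn ℝ 1 (fun u => u ^ μ * f u) (Ici 0) := by
  have hdiff : ∀ u ∈ Ioi (0 : ℝ), DifferentiableAt ℝ f u := fun u hu =>
    (hf.differentiableOn one_ne_zero u (mem_Ici.2 (le_of_lt hu))).differentiableAt (Ici_mem_nhds hu)
  have hf'0 : HasDerivWithinAt f 0 (Ici 0) 0 := by
    have hslope_eq : slope f 0 = fun u => f u / u := by
      ext u
      simp [slope_def_field, hf0]
    rwa [hasDerivWithinAt_iff_tendsto_slope, Ici_sdiff_left, hslope_eq]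
  have hderiv_f : Tendsto (deriv f) (𝓝[>] 0) (𝓝 0) := by
    simpa only [hf'0.derivWithin (uniqueDiffOn_Ici 0 0 self_mem_Ici)] using
      hf.tendsto_deriv_nhdsGT
  have hpow : Tendsto (fun t : ℝ => t ^ μ) (𝓝[>] 0) (𝓝 (0 ^ μ)) :=
    (continuousAt_rpow_const 0 μ (Or.inr hμ)).tendsto.mono_left nhdsWithin_le_nhds
  have hlim := ((tendsto_rpow_mul_div_nhdsGT_zero hμ hslope).const_mul μ).add (hpow.mul hderiv_f)
  rw [mul_zero, mul_zero, add_zero] at hlim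
  refine contDiffOn_one_Ici_of_tendsto_deriv
    ((continuousOn_id.rpow_const fun _ _ => Or.inr hμ).mul hf.continuousOn)
    (contDiffOn_rpow_mul_Ioi (hf.mono Ioi_subset_Ici_self)) (hlim.congr' ?_)
  filter_upwards [self_mem_nhdsWithin] with u hu
  rw [(hasDerivAt_rpow_mul hu (hdiff u hu)).deriv, rpow_sub_one (ne_of_gt hu)]
  ring

end RpowMul

lemma rpow_mul_index_ineq {s μ A B C : ℝ} (hs : 1 ≤ s) (hμ : 0 ≤ μ) (hA : 0 < A)
    (hAB : A ≤ B) (hBA : B ≤ (s + 1) * A) (hBC : B ≤ s * C) (hCB : C ≤ s * B) :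
    0 < μ * A + B ∧
      μ * A + B ≤ (μ + 3 * s ^ 2) * (μ * (μ - 1) * A + 2 * μ * B + C) ∧
      μ * (μ - 1) * A + 2 * μ * B + C ≤ (μ + 3 * s ^ 2) * (μ * A + B) := by
  have hB : 0 < B := hA.trans_le hAB
  have hC : 0 < C := by nlinarith
  have hs3 : 0 ≤ 3 * s ^ 2 - s := by nlinarith
  refine ⟨by positivity, ?_, ?_⟩
  · have hD : μ * B + C ≤ μ * (μ - 1) * A + 2 * μ * B + C := by
      nlinarith [mul_nonneg hμ (sub_nonneg.2 hAB), mul_nonneg (mul_nonneg hμ hμ) hA.le]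
    have := mul_le_mul_of_nonneg_left hD (by positivity : (0 : ℝ) ≤ μ + 3 * s ^ 2)
    nlinarith [mul_nonneg (mul_nonneg hμ hB.le) hs3, mul_nonneg hs3 hB.le,
      mul_nonneg hμ (sub_nonneg.2 hAB), mul_nonneg (mul_nonneg hμ hμ) hB.le,
      mul_nonneg hμ hC.le, mul_nonneg (by linarith : (0 : ℝ) ≤ 3 * s) (sub_nonneg.2 hBC)]
  · nlinarith [mul_nonneg hμ (sub_nonneg.2 hBA), mul_nonneg (mul_nonneg hμ hA.le) hs3,
      mul_nonneg hs3 hB.le]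

namespace IsNFunction

variable {Φ : ℝ → ℝ} {s t : ℝ}

theorem of_deriv (hs : 1 ≤ s) (h0 : Φ 0 = 0)
    (h_zero : Tendsto (fun t => Φ t / t) (𝓝[>] 0) (𝓝 0))
    (h_atTop : Tendsto (fun t => Φ t / t) atTop atTop)
    (h1 : ContDiffOn ℝ 1 Φ (Ici 0)) (h2 : ContDiffOn ℝ 2 Φ (Ioi 0))
    (h_pos : ∀ t, 0 < t → 0 < deriv Φ t)
    (h_lower : ∀ t, 0 < t → (1 / s) * deriv Φ t ≤ t * deriv (deriv Φ) t)
    (h_upper : ∀ t, 0 < t → t * deriv (deriv Φ) t ≤ s * deriv Φ t) :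
    IsNFunction Φ s := by
  have h_mono : StrictMonoOn Φ (Ici 0) :=
    strictMonoOn_of_deriv_pos (convex_Ici 0) h1.continuousOn (by simpa using h_pos)
  refine ⟨hs, fun t ht => h0 ▸ h_mono.monotoneOn self_mem_Ici ht ht, h0, h_mono, ?_, h_zero,
    h_atTop, h1, h2, h_pos, h_lower, h_upper⟩
  rw [← interior_Ici] at h2
  refine convexOn_of_deriv2_nonneg (convex_Ici 0) h1.continuousOn
    (h2.differentiableOn two_ne_zero)
    ((h2.deriv_of_isOpen isOpen_interior (by norm_num)).differentiableOn one_ne_zero) ?_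
  rw [interior_Ici]
  intro t (ht : 0 < t)
  have h_lower_pos : 0 < 1 / s * deriv Φ t := by
    have := h_pos t ht
    positivity
  show 0 ≤ deriv (deriv Φ) t
  exact (pos_of_mul_pos_right (h_lower_pos.trans_le (h_lower t ht)) ht.le).le

lemma pos (hΦ : IsNFunction Φ s) (ht : 0 < t) : 0 < Φ t :=
  hΦ.zero ▸ hΦ.strictMonoOn self_mem_Ici (mem_Ici.2 ht.le) ht

lemma differentiableAt (hΦ : IsNFunction Φ s) (ht : 0 < t) : DifferentiableAt ℝ Φ t :=
  (hΦ.contDiffOn_two.contDiffAt (isOpen_Ioi.mem_nhds ht)).differentiableAt two_ne_zero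

lemma differentiableAt_deriv (hΦ : IsNFunction Φ s) (ht : 0 < t) :
    DifferentiableAt ℝ (deriv Φ) t :=
  ((hΦ.contDiffOn_two.deriv_of_isOpen isOpen_Ioi (by norm_num)).contDiffAt
    (isOpen_Ioi.mem_nhds ht)).differentiableAt one_ne_zero

lemma le_mul_deriv (hΦ : IsNFunction Φ s) (ht : 0 < t) : Φ t ≤ t * deriv Φ t := by
  have := hΦ.convexOn.slope_le_deriv self_mem_Ici (mem_Ici.2 ht.le) ht (hΦ.differentiableAt ht)
  rwa [slope_def_field, hΦ.zero, sub_zero, sub_zero, div_le_iff₀ ht, mul_comm] at this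

lemma mul_deriv_le (hΦ : IsNFunction Φ s) (ht : 0 < t) :
    t * deriv Φ t ≤ (s + 1) * Φ t := by
  -- `derivWithin` keeps `F` continuous at `0`, where `Φ` need not be differentiable.
  set F := fun u => (s + 1) * Φ u - u * derivWithin Φ (Ici 0) u
  have hF_cont : ContinuousOn F (Ici 0) :=
    (continuousOn_const.mul hΦ.contDiffOn_one.continuousOn).sub (continuousOn_id.mul
      (hΦ.contDiffOn_one.continuousOn_derivWithin (uniqueDiffOn_Ici 0) le_rfl))
  have hF_deriv : ∀ x ∈ interior (Ici (0 : ℝ)), HasDerivWithinAt F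
      ((s + 1) * deriv Φ x - (1 * deriv Φ x + x * deriv (deriv Φ) x)) (interior (Ici 0)) x := by
    rw [interior_Ici]
    intro x hx
    refine HasDerivAt.hasDerivWithinAt (HasDerivAt.congr_of_eventuallyEq
      (((hΦ.differentiableAt hx).hasDerivAt.const_mul _).sub
        ((hasDerivAt_id x).mul (hΦ.differentiableAt_deriv hx).hasDerivAt)) ?_)
    filter_upwards [isOpen_Ioi.mem_nhds hx] with u (hu : 0 < u)
    simp only [F, derivWithin_of_mem_nhds (Ici_mem_nhds hu)]
    rfl
  have hF_mono := monotoneOn_of_hasDerivWithinAt_nonneg (convex_Ici 0) hF_cont hF_deriv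
    (fun x hx => by
      rw [interior_Ici] at hx
      linarith [hΦ.index_upper x hx])
  have := hF_mono self_mem_Ici (mem_Ici.2 ht.le) ht.le
  simp only [F, hΦ.zero, derivWithin_of_mem_nhds (Ici_mem_nhds ht)] at this
  linarith

lemma mul_deriv_le_sq_mul_deriv_deriv (hΦ : IsNFunction Φ s) (ht : 0 < t) :
    t * deriv Φ t ≤ s * (t ^ 2 * deriv (deriv Φ) t) := by
  have hs : 0 < s := one_pos.trans_le hΦ.s_ge_one
  have h := hΦ.index_lower t ht
  rw [one_div, inv_mul_le_iff₀ hs] at h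
  nlinarith [mul_le_mul_of_nonneg_left h ht.le]

lemma sq_mul_deriv_deriv_le (hΦ : IsNFunction Φ s) (ht : 0 < t) :
    t ^ 2 * deriv (deriv Φ) t ≤ s * (t * deriv Φ t) := by
  nlinarith [mul_le_mul_of_nonneg_left (hΦ.index_upper t ht) ht.le]

end IsNFunction

/-- If `Φ` is an N-function with index `s ≥ 1` and `μ ≥ 0` is real, then
`Φ_μ(t) := t^μ·Φ(t)` is an N-function with index `μ + 3·s²`. -/
theorem statement9 (Φ : ℝ → ℝ) (s : ℝ) (hΦ : IsNFunction Φ s) (μ : ℝ) (hμ : 0 ≤ μ) :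
    IsNFunction (fun t => t ^ μ * Φ t) (μ + 3 * s ^ 2) := by
  have hs := hΦ.s_ge_one
  have hS : 0 < μ + 3 * s ^ 2 := by positivity
  have h_ineq := fun t (ht : 0 < t) => rpow_mul_index_ineq hs hμ (hΦ.pos ht) (hΦ.le_mul_deriv ht)
    (hΦ.mul_deriv_le ht) (hΦ.mul_deriv_le_sq_mul_deriv_deriv ht) (hΦ.sq_mul_deriv_deriv_le ht)
  refine .of_deriv (by nlinarith) (by simp [hΦ.zero])
    (tendsto_rpow_mul_div_nhdsGT_zero hμ hΦ.tendsto_zero)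
    (tendsto_rpow_mul_div_atTop hμ hΦ.tendsto_atTop)
    (contDiffOn_rpow_mul_Ici hμ hΦ.contDiffOn_one hΦ.zero hΦ.tendsto_zero)
    (contDiffOn_rpow_mul_Ioi hΦ.contDiffOn_two) ?_ ?_ ?_ <;> intro t ht <;>
    obtain ⟨hP, hPQ, hQP⟩ := h_ineq t ht <;>
    rw [deriv_rpow_mul ht (hΦ.differentiableAt ht)]
  · exact mul_pos (rpow_pos_of_pos ht _) hP
  · rw [mul_deriv_deriv_rpow_mul hΦ.contDiffOn_two ht, mul_left_comm]
    refine mul_le_mul_of_nonneg_left ?_ (rpow_pos_of_pos ht _).le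
    rwa [one_div, inv_mul_le_iff₀ hS]
  · rw [mul_deriv_deriv_rpow_mul hΦ.contDiffOn_two ht, mul_left_comm (μ + 3 * s ^ 2)]
    exact mul_le_mul_of_nonneg_left hQP (rpow_pos_of_pos ht _).le
end

section
/- Let n ≥ 2 and let Φ be an N-function with index s ≥ 1. There exists a constant c > 0, depending only on n and s, such that for all z₁, z₂ ∈ ℝⁿ∖{0} one has |V_Φ(z₂) − V_Φ(z₁)|² ≤ c·∫₀¹ |V_Φ(θ·z₂ + (1−θ)·z₁) − V_Φ(z₁)|²·θ⁻¹ dθ. -/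
open Real Set Filter MeasureTheory
open scoped RealInnerProductSpace

/-- `V_Φ(z) := (Φ'(|z|)/|z|)^{1/2} · z` (equal to `0` at `z = 0`). -/
noncomputable def VPhi {n : ℕ} (Φ : ℝ → ℝ) (z : EuclideanSpace ℝ (Fin n)) :
    EuclideanSpace ℝ (Fin n) :=
  ((deriv Φ ‖z‖ / ‖z‖) ^ ((1 : ℝ) / 2)) • z

/-!
For `z ≠ 0` and any `w`, the quantity `|V_Φ(w) - V_Φ(z)|² (|w| + |z|)` is comparable to
`Φ'(|w| + |z|) |w - z|²`, with constants depending only on `s`. Writing `|u a - v b|²` and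
`|a - b|²` as combinations, with weights `|a||b| ± ⟪a, b⟫ ≥ 0`, of their values in the two
collinear configurations `⟪a, b⟫ = ±|a||b|`, this reduces to one-dimensional estimates. Those
follow from the monotonicity of `Φ'`, the bound `Φ'(λt) ≤ λ^s Φ'(t)` for `λ ≥ 1` (as `Φ'(t)/t^s`
decreases) and `(tΦ'(t))' ≤ (s+1) Φ'(t)`, all consequences of the index condition.

For `θ ∈ [1/2, 1]` the point `z_θ = θ z₂ + (1 - θ) z₁` has `|z_θ - z₁| ≍ |z₂ - z₁|` and
`|z_θ| + |z₁| ≍ |z₂| + |z₁|`, so the comparison gives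
`|V_Φ(z₂) - V_Φ(z₁)|² ≲ |V_Φ(z_θ) - V_Φ(z₁)|²`; integrating over `[1/2, 1]` proves the claim.
The same comparison bounds the integrand by `O(θ)` near `θ = 0`, which makes it integrable.
-/

theorem smul_add_one_sub_smul_sub {E : Type*} [AddCommGroup E] [Module ℝ E] (θ : ℝ) (x y : E) :
    θ • y + (1 - θ) • x - x = θ • (y - x) := by
  module

section InnerProduct

variable {E : Type*} [NormedAddCommGroup E] [InnerProductSpace ℝ E]

theorem norm_mul_norm_mul_norm_smul_sub_smul_sq (a b : E) {u v : ℝ} (hu : 0 ≤ u) (hv : 0 ≤ v) :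
    ‖a‖ * ‖b‖ * ‖u • a - v • b‖ ^ 2
      = (‖a‖ * ‖b‖ + ⟪a, b⟫) / 2 * (‖u • a‖ - ‖v • b‖) ^ 2
        + (‖a‖ * ‖b‖ - ⟪a, b⟫) / 2 * (‖u • a‖ + ‖v • b‖) ^ 2 := by
  rw [norm_sub_sq_real, real_inner_smul_left, real_inner_smul_right, norm_smul, norm_smul,
    Real.norm_of_nonneg hu, Real.norm_of_nonneg hv]
  ring

end InnerProduct

theorem le_mul_of_mul_eq_weighted_sum {c x y w₁ w₂ x₁ x₂ y₁ y₂ C : ℝ} (hc : 0 < c)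
    (hw₁ : 0 ≤ w₁) (hw₂ : 0 ≤ w₂) (hx : c * x = w₁ * x₁ + w₂ * x₂)
    (hy : c * y = w₁ * y₁ + w₂ * y₂) (h₁ : x₁ ≤ C * y₁) (h₂ : x₂ ≤ C * y₂) : x ≤ C * y := by
  refine le_of_mul_le_mul_left ?_ hc
  rw [hx, mul_left_comm, hy]
  nlinarith [mul_le_mul_of_nonneg_left h₁ hw₁, mul_le_mul_of_nonneg_left h₂ hw₂]

theorem VPhi_eq_smul {n : ℕ} (Φ : ℝ → ℝ) (z : EuclideanSpace ℝ (Fin n)) :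
    VPhi Φ z = (deriv Φ ‖z‖ / ‖z‖) ^ ((1 : ℝ) / 2) • z := rfl

theorem VPhi_zero {n : ℕ} {Φ : ℝ → ℝ} : VPhi Φ (0 : EuclideanSpace ℝ (Fin n)) = 0 := by
  simp [VPhi]

@[fun_prop]
theorem measurable_VPhi {n : ℕ} {Φ : ℝ → ℝ} :
    Measurable (VPhi Φ : EuclideanSpace ℝ (Fin n) → _) := by
  have := measurable_deriv Φ
  unfold VPhi
  fun_prop

namespace IsNFunction

variable {Φ : ℝ → ℝ} {s : ℝ} {n : ℕ}

theorem hasDerivAt_deriv (hΦ : IsNFunction Φ s) {t : ℝ} (ht : 0 < t) :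
    HasDerivAt (deriv Φ) (deriv (deriv Φ) t) t :=
  ((hΦ.contDiffOn_two.deriv_of_isOpen isOpen_Ioi (by norm_num : (1 : WithTop ℕ∞) + 1 ≤ 2)
    ).differentiableOn one_ne_zero t ht).differentiableAt (isOpen_Ioi.mem_nhds ht) |>.hasDerivAt

theorem deriv_deriv_pos (hΦ : IsNFunction Φ s) {t : ℝ} (ht : 0 < t) :
    0 < deriv (deriv Φ) t := by
  have hs : 0 < 1 / s := one_div_pos.mpr (by linarith [hΦ.s_ge_one])
  have := hΦ.index_lower t ht
  nlinarith [mul_pos hs (hΦ.deriv_pos t ht)]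

theorem strictMonoOn_deriv (hΦ : IsNFunction Φ s) : StrictMonoOn (deriv Φ) (Ioi 0) :=
  strictMonoOn_of_deriv_pos (convex_Ioi 0)
    (fun t ht => (hΦ.hasDerivAt_deriv ht).continuousAt.continuousWithinAt)
    (fun t ht => by
      rw [interior_Ioi] at ht
      exact (hΦ.hasDerivAt_deriv ht).deriv ▸ hΦ.deriv_deriv_pos ht)

theorem deriv_le_deriv (hΦ : IsNFunction Φ s) {a b : ℝ} (ha : 0 < a) (hab : a ≤ b) :
    deriv Φ a ≤ deriv Φ b :=
  hΦ.strictMonoOn_deriv.monotoneOn ha (ha.trans_le hab) hab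

theorem antitoneOn_deriv_div_rpow (hΦ : IsNFunction Φ s) :
    AntitoneOn (fun t => deriv Φ t / t ^ s) (Ioi 0) := by
  have hasDeriv : ∀ t ∈ Ioi (0 : ℝ), HasDerivAt (fun t => deriv Φ t / t ^ s)
      ((deriv (deriv Φ) t * t ^ s - deriv Φ t * (s * t ^ (s - 1))) / (t ^ s) ^ 2) t :=
    fun t ht => (hΦ.hasDerivAt_deriv ht).div (hasDerivAt_rpow_const (Or.inl ht.ne'))
      (rpow_pos_of_pos ht s).ne'
  refine antitoneOn_of_deriv_nonpos (convex_Ioi 0)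
    (fun t ht => (hasDeriv t ht).continuousAt.continuousWithinAt)
    (fun t ht => (hasDeriv t (interior_subset ht)).differentiableAt.differentiableWithinAt)
    (fun t ht => ?_)
  rw [interior_Ioi] at ht
  rw [(hasDeriv t ht).deriv]
  refine div_nonpos_of_nonpos_of_nonneg ?_ (sq_nonneg _)
  have hsplit : t ^ s = t ^ (s - 1) * t := by
    rw [← rpow_add_one ht.ne']; ring_nf
  rw [hsplit]
  nlinarith [hΦ.index_upper t ht, (rpow_pos_of_pos ht (s - 1)).le]

theorem deriv_le_rpow_mul_deriv (hΦ : IsNFunction Φ s) {a b l : ℝ} (ha : 0 < a) (hb : 0 < b)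
    (hl : 1 ≤ l) (hbl : b ≤ l * a) : deriv Φ b ≤ l ^ s * deriv Φ a := by
  have hs : 0 ≤ s := by linarith [hΦ.s_ge_one]
  have hφa := hΦ.deriv_pos a ha
  rcases le_total b a with hba | hab
  · calc deriv Φ b ≤ deriv Φ a := hΦ.deriv_le_deriv hb hba
      _ ≤ l ^ s * deriv Φ a := le_mul_of_one_le_left hφa.le (one_le_rpow hl hs)
  · have h := hΦ.antitoneOn_deriv_div_rpow ha (ha.trans_le hab) hab
    rw [div_le_div_iff₀ (rpow_pos_of_pos hb s) (rpow_pos_of_pos ha s)] at h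
    have hpow : b ^ s ≤ l ^ s * a ^ s := by
      rw [← mul_rpow (by linarith) ha.le]; exact rpow_le_rpow hb.le hbl hs
    nlinarith [rpow_pos_of_pos ha s]

theorem mul_deriv_sub_mul_deriv_le (hΦ : IsNFunction Φ s) {r ρ : ℝ} (hρ : 0 < ρ) (hρr : ρ ≤ r) :
    deriv Φ r * r - deriv Φ ρ * ρ ≤ (s + 1) * deriv Φ r * (r - ρ) := by
  have hasDeriv : ∀ t ∈ Ioi (0 : ℝ), HasDerivAt (fun t => deriv Φ t * t)
      (deriv (deriv Φ) t * t + deriv Φ t * 1) t :=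
    fun t ht => (hΦ.hasDerivAt_deriv ht).mul (hasDerivAt_id t)
  have hIcc : Icc ρ r ⊆ Ioi 0 := fun t ht => hρ.trans_le ht.1
  refine (convex_Icc ρ r).image_sub_le_mul_sub_of_deriv_le
    (fun t ht => (hasDeriv t (hIcc ht)).continuousAt.continuousWithinAt)
    (fun t ht => (hasDeriv t (hIcc (interior_subset ht))).differentiableAt.differentiableWithinAt)
    (fun t ht => ?_) ρ (left_mem_Icc.mpr hρr) r (right_mem_Icc.mpr hρr) hρr
  rw [interior_Icc] at ht
  have ht0 : 0 < t := hρ.trans ht.1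
  rw [(hasDeriv t ht0).deriv]
  have hmono : (s + 1) * deriv Φ t ≤ (s + 1) * deriv Φ r :=
    mul_le_mul_of_nonneg_left (hΦ.deriv_le_deriv ht0 ht.2.le) (by linarith [hΦ.s_ge_one])
  linarith [hΦ.index_upper t ht0]

theorem deriv_mul_sub_le (hΦ : IsNFunction Φ s) {r ρ : ℝ} (hρ : 0 < ρ) (hρr : ρ ≤ r) :
    deriv Φ r * (r - ρ) ≤ deriv Φ r * r - deriv Φ ρ * ρ := by
  nlinarith [hΦ.deriv_le_deriv hρ hρr]

theorem one_le_two_rpow (hΦ : IsNFunction Φ s) : (1 : ℝ) ≤ 2 ^ s :=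
  one_le_rpow (by norm_num) (by linarith [hΦ.s_ge_one])

theorem one_le_sq_add_one_mul_sq_two_rpow (hΦ : IsNFunction Φ s) :
    1 ≤ (s + 1) ^ 2 * (2 ^ s) ^ 2 :=
  one_le_mul_of_one_le_of_one_le (one_le_pow₀ (by linarith [hΦ.s_ge_one]))
    (one_le_pow₀ hΦ.one_le_two_rpow)

theorem two_mul_two_rpow_le (hΦ : IsNFunction Φ s) :
    2 * 2 ^ s ≤ 4 * (s + 1) ^ 2 * (2 ^ s) ^ 2 := by
  have hK := hΦ.one_le_two_rpow
  have hs : 1 ≤ (s + 1) ^ 2 := one_le_pow₀ (by linarith [hΦ.s_ge_one])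
  nlinarith [mul_le_mul_of_nonneg_right hs (sq_nonneg ((2 : ℝ) ^ s))]

section Collinear

variable (hΦ : IsNFunction Φ s) {r ρ X Y : ℝ} (hρ : 0 < ρ) (hρr : ρ ≤ r)
  (hX : 0 ≤ X) (hY : 0 ≤ Y) (hX2 : X ^ 2 = deriv Φ r * r) (hY2 : Y ^ 2 = deriv Φ ρ * ρ)

include hΦ hρ hρr hX2 hY2 in
theorem deriv_mul_sub_le_sq_sub_sq : deriv Φ r * (r - ρ) ≤ X ^ 2 - Y ^ 2 :=
  hX2 ▸ hY2 ▸ hΦ.deriv_mul_sub_le hρ hρr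

include hΦ hρ hρr hX2 hY2 in
theorem sq_le_sq_of_le : Y ^ 2 ≤ X ^ 2 := by
  have := hΦ.deriv_mul_sub_le_sq_sub_sq hρ hρr hX2 hY2
  nlinarith [hΦ.deriv_pos r (hρ.trans_le hρr)]

include hΦ hρ hρr hX hY hX2 in
theorem le_sq_add : deriv Φ (r + ρ) * (r + ρ) ≤ 2 * 2 ^ s * (X + Y) ^ 2 := by
  have hr : 0 < r := hρ.trans_le hρr
  have hdouble := hΦ.deriv_le_rpow_mul_deriv (b := r + ρ) hr (by linarith) one_le_two (by linarith)
  calc deriv Φ (r + ρ) * (r + ρ) ≤ 2 ^ s * deriv Φ r * (2 * r) :=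
        mul_le_mul hdouble (by linarith) (by linarith) (by have := hΦ.deriv_pos r hr; positivity)
    _ = 2 * 2 ^ s * X ^ 2 := by rw [hX2]; ring
    _ ≤ 2 * 2 ^ s * (X + Y) ^ 2 := by gcongr; linarith

include hΦ hρ hρr hX hY hX2 in
theorem le_sq_add_mul :
    deriv Φ (r + ρ) * (r + ρ) ^ 2 ≤ 4 * (s + 1) ^ 2 * (2 ^ s) ^ 2 * ((X + Y) ^ 2 * (r + ρ)) := by
  calc deriv Φ (r + ρ) * (r + ρ) ^ 2 = deriv Φ (r + ρ) * (r + ρ) * (r + ρ) := by ring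
    _ ≤ 2 * 2 ^ s * (X + Y) ^ 2 * (r + ρ) :=
        mul_le_mul_of_nonneg_right (hΦ.le_sq_add hρ hρr hX hY hX2) (by linarith [hρ.trans_le hρr])
    _ ≤ 4 * (s + 1) ^ 2 * (2 ^ s) ^ 2 * ((X + Y) ^ 2 * (r + ρ)) := by
        rw [mul_assoc]
        exact mul_le_mul_of_nonneg_right hΦ.two_mul_two_rpow_le
          (mul_nonneg (sq_nonneg _) (by linarith [hρ.trans_le hρr]))

include hΦ hρ hρr hX hY hX2 hY2

theorem sq_add_le : (X + Y) ^ 2 ≤ 4 * (deriv Φ (r + ρ) * (r + ρ)) := by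
  have hr : 0 < r := hρ.trans_le hρr
  have hYX : Y ≤ X :=
    (pow_le_pow_iff_left₀ hY hX two_ne_zero).mp (hΦ.sq_le_sq_of_le hρ hρr hX2 hY2)
  have hXT : X ^ 2 ≤ deriv Φ (r + ρ) * (r + ρ) := by
    rw [hX2]
    exact mul_le_mul (hΦ.deriv_le_deriv hr (by linarith)) (by linarith) hr.le
      (hΦ.deriv_pos _ (by linarith)).le
  nlinarith

theorem sq_add_mul_le :
    (X + Y) ^ 2 * (r + ρ) ≤ 4 * (s + 1) ^ 2 * (2 ^ s) ^ 2 * (deriv Φ (r + ρ) * (r + ρ) ^ 2) := by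
  have hT : 0 ≤ deriv Φ (r + ρ) * (r + ρ) ^ 2 :=
    mul_nonneg (hΦ.deriv_pos _ (by linarith [hρ.trans_le hρr])).le (sq_nonneg _)
  calc (X + Y) ^ 2 * (r + ρ) ≤ 4 * (deriv Φ (r + ρ) * (r + ρ)) * (r + ρ) := by
        gcongr
        · linarith
        · exact hΦ.sq_add_le hρ hρr hX hY hX2 hY2
    _ = 4 * (deriv Φ (r + ρ) * (r + ρ) ^ 2) := by ring
    _ ≤ 4 * (s + 1) ^ 2 * (2 ^ s) ^ 2 * (deriv Φ (r + ρ) * (r + ρ) ^ 2) :=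
        mul_le_mul_of_nonneg_right (by nlinarith [hΦ.one_le_sq_add_one_mul_sq_two_rpow]) hT

theorem sq_sub_mul_le :
    (X - Y) ^ 2 * (r + ρ) ≤ 4 * (s + 1) ^ 2 * (2 ^ s) ^ 2 * (deriv Φ (r + ρ) * (r - ρ) ^ 2) := by
  have hr : 0 < r := hρ.trans_le hρr
  have hP := hΦ.deriv_pos (r + ρ) (by linarith)
  have hK := hΦ.one_le_two_rpow
  have hdiff : X ^ 2 - Y ^ 2 ≤ (s + 1) * deriv Φ (r + ρ) * (r - ρ) := by
    rw [hX2, hY2]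
    refine (hΦ.mul_deriv_sub_mul_deriv_le hρ hρr).trans ?_
    have := hΦ.deriv_le_deriv hr (le_add_of_nonneg_right hρ.le)
    gcongr
    linarith [hΦ.s_ge_one]
  have hdiff0 : 0 ≤ X ^ 2 - Y ^ 2 := by linarith [hΦ.sq_le_sq_of_le hρ hρr hX2 hY2]
  have hsum := hΦ.le_sq_add hρ hρr hX hY hX2
  refine le_of_mul_le_mul_right ?_ hP
  calc (X - Y) ^ 2 * (r + ρ) * deriv Φ (r + ρ)
      ≤ (X - Y) ^ 2 * (2 * 2 ^ s * (X + Y) ^ 2) := by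
        rw [mul_assoc]; exact mul_le_mul_of_nonneg_left (by linarith) (sq_nonneg _)
    _ = 2 * 2 ^ s * (X ^ 2 - Y ^ 2) ^ 2 := by ring
    _ ≤ 2 * 2 ^ s * ((s + 1) * deriv Φ (r + ρ) * (r - ρ)) ^ 2 := by gcongr
    _ ≤ 4 * (2 ^ s) ^ 2 * ((s + 1) * deriv Φ (r + ρ) * (r - ρ)) ^ 2 := by
        gcongr
        · norm_num
        · nlinarith
    _ = 4 * (s + 1) ^ 2 * (2 ^ s) ^ 2 * (deriv Φ (r + ρ) * (r - ρ) ^ 2) * deriv Φ (r + ρ) := by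
        ring

theorem le_sq_sub_mul :
    deriv Φ (r + ρ) * (r - ρ) ^ 2 ≤ 4 * (s + 1) ^ 2 * (2 ^ s) ^ 2 * ((X - Y) ^ 2 * (r + ρ)) := by
  have hr : 0 < r := hρ.trans_le hρr
  have hP := hΦ.deriv_pos (r + ρ) (by linarith)
  have hdouble := hΦ.deriv_le_rpow_mul_deriv (b := r + ρ) hr (by linarith) one_le_two (by linarith)
  have hdiff : deriv Φ (r + ρ) * (r - ρ) ≤ 2 ^ s * (X ^ 2 - Y ^ 2) := by
    calc deriv Φ (r + ρ) * (r - ρ) ≤ 2 ^ s * deriv Φ r * (r - ρ) := by gcongr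
      _ ≤ 2 ^ s * (X ^ 2 - Y ^ 2) := by
        rw [mul_assoc]
        exact mul_le_mul_of_nonneg_left (hΦ.deriv_mul_sub_le_sq_sub_sq hρ hρr hX2 hY2)
          (by positivity)
  have hsum := hΦ.sq_add_le hρ hρr hX hY hX2 hY2
  refine le_of_mul_le_mul_right ?_ hP
  calc deriv Φ (r + ρ) * (r - ρ) ^ 2 * deriv Φ (r + ρ) = (deriv Φ (r + ρ) * (r - ρ)) ^ 2 := by
        ring
    _ ≤ (2 ^ s * (X ^ 2 - Y ^ 2)) ^ 2 := by
        gcongr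
    _ = (2 ^ s) ^ 2 * (X - Y) ^ 2 * (X + Y) ^ 2 := by ring
    _ ≤ (2 ^ s) ^ 2 * (X - Y) ^ 2 * (4 * (deriv Φ (r + ρ) * (r + ρ))) := by gcongr
    _ ≤ (s + 1) ^ 2 * ((2 ^ s) ^ 2 * (X - Y) ^ 2 * (4 * (deriv Φ (r + ρ) * (r + ρ)))) :=
        le_mul_of_one_le_left (by positivity) (by nlinarith [hΦ.s_ge_one])
    _ = 4 * (s + 1) ^ 2 * (2 ^ s) ^ 2 * ((X - Y) ^ 2 * (r + ρ)) * deriv Φ (r + ρ) := by ring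

end Collinear

theorem norm_VPhi_sq (hΦ : IsNFunction Φ s) {z : EuclideanSpace ℝ (Fin n)} (hz : z ≠ 0) :
    ‖VPhi Φ z‖ ^ 2 = deriv Φ ‖z‖ * ‖z‖ := by
  have hr : 0 < ‖z‖ := norm_pos_iff.mpr hz
  have hq : 0 ≤ deriv Φ ‖z‖ / ‖z‖ := div_nonneg (hΦ.deriv_pos _ hr).le hr.le
  rw [VPhi, norm_smul, mul_pow, Real.norm_of_nonneg (rpow_nonneg hq _), ← rpow_natCast,
    ← rpow_mul hq]
  norm_num
  field_simp

theorem VPhi_comparable_of_norm_le (hΦ : IsNFunction Φ s) {a b : EuclideanSpace ℝ (Fin n)}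
    (ha : a ≠ 0) (hb : b ≠ 0) (hba : ‖b‖ ≤ ‖a‖) :
    ‖VPhi Φ a - VPhi Φ b‖ ^ 2 * (‖a‖ + ‖b‖)
        ≤ 4 * (s + 1) ^ 2 * (2 ^ s) ^ 2 * (deriv Φ (‖a‖ + ‖b‖) * ‖a - b‖ ^ 2) ∧
      deriv Φ (‖a‖ + ‖b‖) * ‖a - b‖ ^ 2
        ≤ 4 * (s + 1) ^ 2 * (2 ^ s) ^ 2 * (‖VPhi Φ a - VPhi Φ b‖ ^ 2 * (‖a‖ + ‖b‖)) := by
  have hρ : 0 < ‖b‖ := norm_pos_iff.mpr hb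
  have hr : 0 < ‖a‖ := norm_pos_iff.mpr ha
  have hu : 0 ≤ (deriv Φ ‖a‖ / ‖a‖) ^ ((1 : ℝ) / 2) :=
    rpow_nonneg (div_nonneg (hΦ.deriv_pos _ hr).le hr.le) _
  have hv : 0 ≤ (deriv Φ ‖b‖ / ‖b‖) ^ ((1 : ℝ) / 2) :=
    rpow_nonneg (div_nonneg (hΦ.deriv_pos _ hρ).le hρ.le) _
  have hV := norm_mul_norm_mul_norm_smul_sub_smul_sq a b hu hv
  have hz := norm_mul_norm_mul_norm_smul_sub_smul_sq a b zero_le_one zero_le_one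
  simp only [one_smul] at hz
  rw [← VPhi_eq_smul, ← VPhi_eq_smul] at hV
  have hsame : 0 ≤ (‖a‖ * ‖b‖ + ⟪a, b⟫) / 2 := by
    linarith [abs_le.mp (abs_real_inner_le_norm a b)]
  have hopp : 0 ≤ (‖a‖ * ‖b‖ - ⟪a, b⟫) / 2 := by
    linarith [abs_le.mp (abs_real_inner_le_norm a b)]
  have hX := hΦ.norm_VPhi_sq ha
  have hY := hΦ.norm_VPhi_sq hb
  have hc : 0 < ‖a‖ * ‖b‖ := mul_pos hr hρ
  constructor
  · refine le_mul_of_mul_eq_weighted_sum hc hsame hopp ?_ ?_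
      (hΦ.sq_sub_mul_le hρ hba (norm_nonneg _) (norm_nonneg _) hX hY)
      (hΦ.sq_add_mul_le hρ hba (norm_nonneg _) (norm_nonneg _) hX hY)
    · linear_combination (‖a‖ + ‖b‖) * hV
    · linear_combination deriv Φ (‖a‖ + ‖b‖) * hz
  · refine le_mul_of_mul_eq_weighted_sum hc hsame hopp ?_ ?_
      (hΦ.le_sq_sub_mul hρ hba (norm_nonneg _) (norm_nonneg _) hX hY)
      (hΦ.le_sq_add_mul hρ hba (norm_nonneg _) (norm_nonneg (VPhi Φ b)) hX)
    · linear_combination deriv Φ (‖a‖ + ‖b‖) * hz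
    · linear_combination (‖a‖ + ‖b‖) * hV

theorem VPhi_comparable (hΦ : IsNFunction Φ s) {a b : EuclideanSpace ℝ (Fin n)} (hb : b ≠ 0) :
    ‖VPhi Φ a - VPhi Φ b‖ ^ 2 * (‖a‖ + ‖b‖)
        ≤ 4 * (s + 1) ^ 2 * (2 ^ s) ^ 2 * (deriv Φ (‖a‖ + ‖b‖) * ‖a - b‖ ^ 2) ∧
      deriv Φ (‖a‖ + ‖b‖) * ‖a - b‖ ^ 2
        ≤ 4 * (s + 1) ^ 2 * (2 ^ s) ^ 2 * (‖VPhi Φ a - VPhi Φ b‖ ^ 2 * (‖a‖ + ‖b‖)) := by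
  by_cases ha : a = 0
  · subst ha
    have hρ : 0 < ‖b‖ := norm_pos_iff.mpr hb
    have hφ : 0 ≤ deriv Φ ‖b‖ * ‖b‖ ^ 2 := by
      have := hΦ.deriv_pos _ hρ; positivity
    have hC : 1 ≤ 4 * (s + 1) ^ 2 * (2 ^ s) ^ 2 := by
      linarith [hΦ.one_le_sq_add_one_mul_sq_two_rpow]
    simp only [VPhi_zero, zero_sub, norm_neg, norm_zero, zero_add, hΦ.norm_VPhi_sq hb]
    constructor <;> nlinarith
  rcases le_total ‖b‖ ‖a‖ with hba | hab
  · exact hΦ.VPhi_comparable_of_norm_le ha hb hba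
  · have h := hΦ.VPhi_comparable_of_norm_le hb ha hab
    rwa [norm_sub_rev (VPhi Φ b), norm_sub_rev b, add_comm ‖b‖] at h

theorem norm_VPhi_sub_sq_le_of_norm_sub_le (hΦ : IsNFunction Φ s)
    {a b : EuclideanSpace ℝ (Fin n)} (hb : b ≠ 0) {R : ℝ} (hR : ‖a - b‖ ≤ R) :
    ‖VPhi Φ a - VPhi Φ b‖ ^ 2
      ≤ 4 * (s + 1) ^ 2 * (2 ^ s) ^ 2 * deriv Φ (R + 2 * ‖b‖) * ‖a - b‖ ^ 2 / ‖b‖ := by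
  have hρ : 0 < ‖b‖ := norm_pos_iff.mpr hb
  have hT : ‖a‖ + ‖b‖ ≤ R + 2 * ‖b‖ := by linarith [norm_le_norm_add_norm_sub' a b]
  have hφ := hΦ.deriv_le_deriv (by linarith [norm_nonneg a]) hT
  rw [le_div_iff₀ hρ]
  calc ‖VPhi Φ a - VPhi Φ b‖ ^ 2 * ‖b‖ ≤ ‖VPhi Φ a - VPhi Φ b‖ ^ 2 * (‖a‖ + ‖b‖) := by
        gcongr; linarith [norm_nonneg a]
    _ ≤ 4 * (s + 1) ^ 2 * (2 ^ s) ^ 2 * (deriv Φ (‖a‖ + ‖b‖) * ‖a - b‖ ^ 2) :=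
        (hΦ.VPhi_comparable hb).1
    _ ≤ 4 * (s + 1) ^ 2 * (2 ^ s) ^ 2 * deriv Φ (R + 2 * ‖b‖) * ‖a - b‖ ^ 2 := by
        rw [mul_assoc _ (deriv Φ _)]; gcongr

theorem norm_VPhi_sub_sq_le_mul_of_norm_sub_le (hΦ : IsNFunction Φ s)
    {a b c : EuclideanSpace ℝ (Fin n)} (hb : b ≠ 0) (hac : ‖a - b‖ ≤ 2 * ‖c - b‖)
    (hca : ‖c - b‖ ≤ ‖a - b‖) :
    ‖VPhi Φ a - VPhi Φ b‖ ^ 2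
      ≤ 12 * 4 ^ s * (4 * (s + 1) ^ 2 * (2 ^ s) ^ 2) ^ 2 * ‖VPhi Φ c - VPhi Φ b‖ ^ 2 := by
  set C := 4 * (s + 1) ^ 2 * (2 ^ s) ^ 2
  have hρ : 0 < ‖b‖ := norm_pos_iff.mpr hb
  have ha := norm_le_norm_add_norm_sub' a b
  have hc := norm_le_norm_add_norm_sub' c b
  have hab := norm_sub_le a b
  have hcb := norm_sub_le c b
  have hTa : 0 < ‖a‖ + ‖b‖ := by linarith [norm_nonneg a]
  have hTc : 0 < ‖c‖ + ‖b‖ := by linarith [norm_nonneg c]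
  have hφ : deriv Φ (‖a‖ + ‖b‖) ≤ 4 ^ s * deriv Φ (‖c‖ + ‖b‖) :=
    hΦ.deriv_le_rpow_mul_deriv hTc hTa (by norm_num) (by linarith [norm_nonneg c])
  have hsq : ‖a - b‖ ^ 2 ≤ 4 * ‖c - b‖ ^ 2 := by nlinarith [norm_nonneg (a - b)]
  obtain ⟨hupper, -⟩ := hΦ.VPhi_comparable (a := a) hb
  obtain ⟨-, hlower⟩ := hΦ.VPhi_comparable (a := c) hb
  refine le_of_mul_le_mul_right ?_ hTa
  calc ‖VPhi Φ a - VPhi Φ b‖ ^ 2 * (‖a‖ + ‖b‖)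
      ≤ C * (deriv Φ (‖a‖ + ‖b‖) * ‖a - b‖ ^ 2) := hupper
    _ ≤ C * (4 ^ s * deriv Φ (‖c‖ + ‖b‖) * (4 * ‖c - b‖ ^ 2)) := by
        have := hΦ.deriv_pos _ hTc
        gcongr
    _ = 4 * 4 ^ s * C * (deriv Φ (‖c‖ + ‖b‖) * ‖c - b‖ ^ 2) := by ring
    _ ≤ 4 * 4 ^ s * C * (C * (‖VPhi Φ c - VPhi Φ b‖ ^ 2 * (‖c‖ + ‖b‖))) := by gcongr
    _ ≤ 4 * 4 ^ s * C * (C * (‖VPhi Φ c - VPhi Φ b‖ ^ 2 * (3 * (‖a‖ + ‖b‖)))) := by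
        gcongr; linarith [norm_nonneg a]
    _ = 12 * 4 ^ s * C ^ 2 * ‖VPhi Φ c - VPhi Φ b‖ ^ 2 * (‖a‖ + ‖b‖) := by ring

theorem intervalIntegrable_VPhi_segment (hΦ : IsNFunction Φ s)
    {z₁ : EuclideanSpace ℝ (Fin n)} (h₁ : z₁ ≠ 0) (z₂ : EuclideanSpace ℝ (Fin n)) :
    IntervalIntegrable (fun θ : ℝ => ‖VPhi Φ (θ • z₂ + (1 - θ) • z₁) - VPhi Φ z₁‖ ^ 2 * θ⁻¹)
      volume 0 1 := by
  set L := 4 * (s + 1) ^ 2 * (2 ^ s) ^ 2 * deriv Φ (‖z₂ - z₁‖ + 2 * ‖z₁‖) * ‖z₂ - z₁‖ ^ 2 / ‖z₁‖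
  refine IntervalIntegrable.mono_fun' (g := fun _ => L) intervalIntegrable_const
    (Measurable.aestronglyMeasurable (by fun_prop)) ?_
  rw [uIoc_of_le zero_le_one]
  filter_upwards [ae_restrict_mem measurableSet_Ioc] with θ ⟨hθ₀, hθ₁⟩
  have hdist : ‖θ • z₂ + (1 - θ) • z₁ - z₁‖ = θ * ‖z₂ - z₁‖ := by
    rw [smul_add_one_sub_smul_sub, norm_smul, Real.norm_of_nonneg hθ₀.le]
  have hbound := hΦ.norm_VPhi_sub_sq_le_of_norm_sub_le h₁
    (a := θ • z₂ + (1 - θ) • z₁) (R := ‖z₂ - z₁‖)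
    (by rw [hdist]; exact mul_le_of_le_one_left (norm_nonneg _) hθ₁)
  rw [hdist] at hbound
  have hL : 0 ≤ L := by
    have := hΦ.deriv_pos (‖z₂ - z₁‖ + 2 * ‖z₁‖) (by positivity)
    positivity
  rw [Real.norm_of_nonneg (by positivity)]
  calc ‖VPhi Φ (θ • z₂ + (1 - θ) • z₁) - VPhi Φ z₁‖ ^ 2 * θ⁻¹ ≤ L * θ ^ 2 * θ⁻¹ := by
        gcongr
        exact hbound.trans_eq (by simp only [L]; ring)
    _ = L * θ := by field_simp
    _ ≤ L := mul_le_of_le_one_right hL hθ₁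

theorem norm_VPhi_sub_sq_le_mul_of_mem_Icc (hΦ : IsNFunction Φ s)
    {z₁ : EuclideanSpace ℝ (Fin n)} (h₁ : z₁ ≠ 0) (z₂ : EuclideanSpace ℝ (Fin n)) {θ : ℝ}
    (hθ : θ ∈ Icc (1 / 2 : ℝ) 1) :
    ‖VPhi Φ z₂ - VPhi Φ z₁‖ ^ 2
      ≤ 12 * 4 ^ s * (4 * (s + 1) ^ 2 * (2 ^ s) ^ 2) ^ 2
        * (‖VPhi Φ (θ • z₂ + (1 - θ) • z₁) - VPhi Φ z₁‖ ^ 2 * θ⁻¹) := by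
  obtain ⟨hθ₀, hθ₁⟩ := hθ
  have hdist : ‖θ • z₂ + (1 - θ) • z₁ - z₁‖ = θ * ‖z₂ - z₁‖ := by
    rw [smul_add_one_sub_smul_sub, norm_smul, Real.norm_of_nonneg (by linarith)]
  refine (hΦ.norm_VPhi_sub_sq_le_mul_of_norm_sub_le h₁ (a := z₂) (c := θ • z₂ + (1 - θ) • z₁)
    (by rw [hdist]; nlinarith [norm_nonneg (z₂ - z₁)])
    (by rw [hdist]; exact mul_le_of_le_one_left (norm_nonneg _) hθ₁)).trans ?_
  gcongr
  exact le_mul_of_one_le_right (sq_nonneg _) ((one_le_inv₀ (by linarith)).mpr hθ₁)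

end IsNFunction

theorem statement13_general (n : ℕ) (s : ℝ) (hs : 1 ≤ s) :
    ∃ c : ℝ, 0 < c ∧
      ∀ Φ : ℝ → ℝ, IsNFunction Φ s →
        ∀ z₁ z₂ : EuclideanSpace ℝ (Fin n), z₁ ≠ 0 → z₂ ≠ 0 →
          ‖VPhi Φ z₂ - VPhi Φ z₁‖ ^ 2
            ≤ c * ∫ θ in (0 : ℝ)..1,
                ‖VPhi Φ (θ • z₂ + (1 - θ) • z₁) - VPhi Φ z₁‖ ^ 2 * θ⁻¹ := by
  have hK : 0 < 12 * 4 ^ s * (4 * (s + 1) ^ 2 * (2 ^ s) ^ 2) ^ 2 := by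
    have : 0 < s + 1 := by linarith
    positivity
  set K := 12 * 4 ^ s * (4 * (s + 1) ^ 2 * (2 ^ s) ^ 2) ^ 2
  refine ⟨2 * K, by positivity, fun Φ hΦ z₁ z₂ h₁ _ => ?_⟩
  have hint := hΦ.intervalIntegrable_VPhi_segment h₁ z₂
  have hfar : ∀ θ ∈ Icc (1 / 2 : ℝ) 1, ‖VPhi Φ z₂ - VPhi Φ z₁‖ ^ 2 / K
      ≤ ‖VPhi Φ (θ • z₂ + (1 - θ) • z₁) - VPhi Φ z₁‖ ^ 2 * θ⁻¹ := fun θ hθ =>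
    (div_le_iff₀' hK).mpr (hΦ.norm_VPhi_sub_sq_le_mul_of_mem_Icc h₁ z₂ hθ)
  calc ‖VPhi Φ z₂ - VPhi Φ z₁‖ ^ 2
      = 2 * K * ∫ _ in (1 / 2 : ℝ)..1, ‖VPhi Φ z₂ - VPhi Φ z₁‖ ^ 2 / K := by
        rw [intervalIntegral.integral_const, smul_eq_mul]
        field_simp
        ring
    _ ≤ 2 * K * ∫ θ in (1 / 2 : ℝ)..1,
          ‖VPhi Φ (θ • z₂ + (1 - θ) • z₁) - VPhi Φ z₁‖ ^ 2 * θ⁻¹ := by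
        gcongr
        exact intervalIntegral.integral_mono_on (by norm_num) intervalIntegrable_const
          (hint.mono_set (uIcc_subset_uIcc (by norm_num) (by simp))) hfar
    _ ≤ 2 * K * ∫ θ in (0 : ℝ)..1, ‖VPhi Φ (θ • z₂ + (1 - θ) • z₁) - VPhi Φ z₁‖ ^ 2 * θ⁻¹ := by
        gcongr
        refine intervalIntegral.integral_mono_interval (by norm_num) (by norm_num) le_rfl ?_ hint
        filter_upwards [ae_restrict_mem measurableSet_Ioc] with θ hθ
        exact mul_nonneg (sq_nonneg _) (inv_nonneg.mpr hθ.1.le)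

/-- For `n ≥ 2` and `s ≥ 1` there is `c > 0`, depending only on `n` and
`s`, such that for every N-function `Φ` with index `s` and all `z₁, z₂ ∈ ℝⁿ∖{0}`,
`|V_Φ(z₂) − V_Φ(z₁)|² ≤ c·∫₀¹ |V_Φ(θz₂ + (1−θ)z₁) − V_Φ(z₁)|²·θ⁻¹ dθ`. -/
theorem statement13 (n : ℕ) (hn : 2 ≤ n) (s : ℝ) (hs : 1 ≤ s) :
    ∃ c : ℝ, 0 < c ∧
      ∀ Φ : ℝ → ℝ, IsNFunction Φ s →
        ∀ z₁ z₂ : EuclideanSpace ℝ (Fin n), z₁ ≠ 0 → z₂ ≠ 0 →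
          ‖VPhi Φ z₂ - VPhi Φ z₁‖ ^ 2
            ≤ c * ∫ θ in (0 : ℝ)..1,
                ‖VPhi Φ (θ • z₂ + (1 - θ) • z₁) - VPhi Φ z₁‖ ^ 2 * θ⁻¹ :=
  statement13_general n s hs
end
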